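/- arXiv:1302.3513 — 6 statements merged into one kernel-verified Lean document; each statement's English description precedes it below -/
import Mathlib

section
/- Let Ω = {(v₁,v₂) ∈ ℝ² | v₂ ≤ |v₁|}. Then the set of stable Ω-dense directions from the origin (0,0) is 𝒟^Ω_stab((0,0)) = {(v₁,v₂) ∈ ℝ² | v₂ ≤ −|v₁|}. -/
def IsDenseDir {m : ℕ} (Ω : Set (EuclideanSpace ℝ (Fin m)))
    (v v' : EuclideanSpace ℝ (Fin m)) : Prop :=
  ∀ ε > (0 : ℝ), ∃ α : ℝ, 0 < α ∧ α < ε ∧ α ≤ 1 ∧ v + α • (v' - v) ∈ Ω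

def IsStableDenseDir {m : ℕ} (Ω : Set (EuclideanSpace ℝ (Fin m)))
    (v v' : EuclideanSpace ℝ (Fin m)) : Prop :=
  ∃ ε > (0 : ℝ), ∀ v'' ∈ Metric.closedBall v ε ∩ Ω, IsDenseDir Ω v'' v'

/-!
If `v' 1 ≤ -|v' 0|`, the whole segment from any point of `Ω = {v 1 ≤ |v 0|}` to `v'` stays in `Ω`,
so `v'` is a dense direction from every point of `Ω`.
Conversely, if `-|v' 0| < v' 1`, pick the sign `σ` of `v' 0` and the boundary points
`w = (-σ t, t)` with `t > 0` arbitrarily small. Near `w`, `Ω` is the half-plane `v 1 + σ v 0 ≤ 0`,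
whose defining linear form vanishes at `w` and is positive at `v'`, so the segment from `w`
towards `v'` leaves `Ω` immediately.
-/

open Metric

section DenseDirections

variable {m : ℕ} {Ω : Set (EuclideanSpace ℝ (Fin m))} {v v' : EuclideanSpace ℝ (Fin m)}

theorem add_smul_sub_apply (α : ℝ) (i : Fin m) :
    (v + α • (v' - v)) i = v i + α * (v' i - v i) :=
  rfl

theorem IsDenseDir.of_forall_mem (h : ∀ α : ℝ, 0 < α → α ≤ 1 → v + α • (v' - v) ∈ Ω) :
    IsDenseDir Ω v v' := by
  intro ε hε
  have hmin : 0 < min ε 1 := lt_min hε one_pos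
  refine ⟨min ε 1 / 2, by positivity, ?_, ?_, h _ (by positivity) ?_⟩ <;>
    linarith [min_le_left ε 1, min_le_right ε 1]

theorem IsStableDenseDir.of_forall_mem (h : ∀ w ∈ Ω, IsDenseDir Ω w v') :
    IsStableDenseDir Ω v v' :=
  ⟨1, one_pos, fun w hw => h w hw.2⟩

end DenseDirections

def belowAbs : Set (EuclideanSpace ℝ (Fin 2)) := {v | v 1 ≤ |v 0|}

def belowNegAbs : Set (EuclideanSpace ℝ (Fin 2)) := {v | v 1 ≤ -|v 0|}

theorem add_smul_sub_mem_belowAbs {w v' : EuclideanSpace ℝ (Fin 2)} (hw : w ∈ belowAbs)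
    (hv' : v' ∈ belowNegAbs) (α : ℝ) (hα₀ : 0 ≤ α) (hα₁ : α ≤ 1) :
    w + α • (v' - w) ∈ belowAbs := by
  simp only [belowAbs, belowNegAbs, Set.mem_ofPred_eq, add_smul_sub_apply] at hw hv' ⊢
  have hrev : (1 - α) * |w 0| - α * |v' 0| ≤ |w 0 + α * (v' 0 - w 0)| := by
    calc (1 - α) * |w 0| - α * |v' 0| = |(1 - α) * w 0| - |α * v' 0| := by
          rw [abs_mul, abs_mul, abs_of_nonneg hα₀, abs_of_nonneg (sub_nonneg.mpr hα₁)]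
      _ ≤ |(1 - α) * w 0 + α * v' 0| := abs_sub_abs_le_abs_add _ _
      _ = |w 0 + α * (v' 0 - w 0)| := by ring_nf
  nlinarith

theorem norm_corner_le {σ t : ℝ} (hσ : |σ| = 1) (ht : 0 ≤ t) :
    ‖(WithLp.toLp 2 ![-σ * t, t] : EuclideanSpace ℝ (Fin 2))‖ ≤ 2 * t := by
  have hσ2 : σ ^ 2 = 1 := by rw [← sq_abs, hσ, one_pow]
  rw [EuclideanSpace.norm_eq, Real.sqrt_le_left (by positivity)]
  simp only [Fin.sum_univ_two, Real.norm_eq_abs, sq_abs, Matrix.cons_val_zero,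
    Matrix.cons_val_one]
  nlinarith

theorem not_isDenseDir_belowAbs_corner {σ t : ℝ} {v' : EuclideanSpace ℝ (Fin 2)}
    (hσ : |σ| = 1) (hσv' : v' 0 = σ * |v' 0|) (ht : 0 < t) (hv' : -|v' 0| < v' 1) :
    ¬ IsDenseDir belowAbs (WithLp.toLp 2 ![-σ * t, t]) v' := by
  intro hdense
  have hden : 0 < |v' 0| + t := by positivity
  obtain ⟨α, hα₀, hαlt, -, hmem⟩ := hdense (t / (|v' 0| + t)) (by positivity)
  rw [lt_div_iff₀ hden] at hαlt
  simp only [belowAbs, Set.mem_ofPred_eq, add_smul_sub_apply, Matrix.cons_val_zero,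
    Matrix.cons_val_one] at hmem
  have hfirst : -σ * t + α * (v' 0 - -σ * t) = -σ * (t - α * (|v' 0| + t)) := by
    conv_lhs => rw [hσv']
    ring
  rw [hfirst, abs_mul, abs_neg, hσ, one_mul, abs_of_pos (by linarith)] at hmem
  nlinarith

theorem exists_not_isDenseDir_belowAbs {v' : EuclideanSpace ℝ (Fin 2)} (hv' : -|v' 0| < v' 1)
    {ε : ℝ} (hε : 0 < ε) :
    ∃ w ∈ closedBall 0 ε ∩ belowAbs, ¬ IsDenseDir belowAbs w v' := by
  obtain ⟨σ, hσ, hσv'⟩ : ∃ σ : ℝ, |σ| = 1 ∧ v' 0 = σ * |v' 0| := by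
    rcases le_or_gt 0 (v' 0) with h | h
    · exact ⟨1, by simp [abs_of_nonneg h]⟩
    · exact ⟨-1, by simp [abs_of_neg h]⟩
  refine ⟨WithLp.toLp 2 ![-σ * (ε / 2), ε / 2], ⟨?_, ?_⟩,
    not_isDenseDir_belowAbs_corner hσ hσv' (by positivity) hv'⟩
  · rw [mem_closedBall, dist_zero_right]
    exact (norm_corner_le hσ (half_pos hε).le).trans_eq (by ring)
  · simp [belowAbs, abs_mul, hσ, abs_of_pos (half_pos hε)]

theorem stmt3 :
    {v' | IsStableDenseDir {v : EuclideanSpace ℝ (Fin 2) | v 1 ≤ |v 0|}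
        (0 : EuclideanSpace ℝ (Fin 2)) v'} =
      {v' : EuclideanSpace ℝ (Fin 2) | v' 1 ≤ -|v' 0|} := by
  change {v' | IsStableDenseDir belowAbs 0 v'} = belowNegAbs
  ext v'
  constructor
  · rintro ⟨ε, hε, hstable⟩
    by_contra hv'
    obtain ⟨w, hw, hnot⟩ := exists_not_isDenseDir_belowAbs (not_le.mp hv') hε
    exact hnot (hstable w hw)
  · intro hv'
    exact IsStableDenseDir.of_forall_mem fun w hw => IsDenseDir.of_forall_mem
      fun α hα₀ hα₁ => add_smul_sub_mem_belowAbs hw hv' α hα₀.le hα₁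
end

section
/- Let Ω = {(v₁,v₂) ∈ ℝ² | v₂ ≤ v₁²} and v = (v₀, v₀²) for some v₀ ∈ ℝ. Then the set of Ω-dense directions from v equals the hypograph of the tangent line T_{v₀}(x) = v₀(2x − v₀), i.e. 𝒟^Ω(v) = {(x,y) ∈ ℝ² | y ≤ v₀(2x − v₀)}, and the set of stable Ω-dense directions from v equals the strict hypograph 𝒟^Ω_stab(v) = {(x,y) ∈ ℝ² | y < v₀(2x − v₀)}. In particular v ∉ 𝒟^Ω_stab(v). -/
set_option maxHeartbeats 1000000

private lemma coord_abs_le_dist (x y : EuclideanSpace ℝ (Fin 2)) (i : Fin 2) :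
    |x i - y i| ≤ dist x y := by
  rw [EuclideanSpace.dist_eq, Fin.sum_univ_two]
  rw [show |x i - y i| = Real.sqrt ((x i - y i)^2) by rw [Real.sqrt_sq_eq_abs]]
  apply Real.sqrt_le_sqrt
  rw [Real.dist_eq, Real.dist_eq, sq_abs, sq_abs]
  have hi : i = 0 ∨ i = 1 := by omega
  rcases hi with hi | hi <;> subst hi <;>
    nlinarith [sq_nonneg (x 0 - y 0), sq_nonneg (x 1 - y 1)]

/-- From a point on the parabola, a dense direction must lie under the tangent line. -/
private lemma lemA (u₀ : ℝ) (u v' : EuclideanSpace ℝ (Fin 2)) (hu0 : u 0 = u₀)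
    (hu1 : u 1 = u₀ ^ 2)
    (h : IsDenseDir {w : EuclideanSpace ℝ (Fin 2) | w 1 ≤ (w 0) ^ 2} u v') :
    v' 1 ≤ u₀ * (2 * v' 0 - u₀) := by
  by_contra hc
  push_neg at hc
  set d : ℝ := v' 0 - u₀ with hd
  set g : ℝ := v' 1 - u₀ * (2 * v' 0 - u₀) with hg
  have hg0 : 0 < g := by simp only [hg]; linarith
  obtain ⟨α, hα0, hαε, hα1, hmem⟩ := h (g / (d ^ 2 + 1)) (by positivity)
  simp only [Set.mem_setOf_eq, PiLp.add_apply, PiLp.smul_apply, PiLp.sub_apply,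
    smul_eq_mul] at hmem
  rw [hu0, hu1] at hmem
  rw [lt_div_iff₀ (by positivity)] at hαε
  have k1 : α * g ≤ α ^ 2 * d ^ 2 := by rw [hg, hd]; nlinarith [hmem]
  have k2 : α * (α * (d ^ 2 + 1)) < α * g := mul_lt_mul_of_pos_left hαε hα0
  nlinarith [k1, k2, mul_pos hα0 hα0]

/-- From any point of Ω, a direction under the tangent line at w 0 is dense. -/
private lemma lemB (w v' : EuclideanSpace ℝ (Fin 2)) (hw : w 1 ≤ (w 0) ^ 2)
    (h : v' 1 ≤ w 0 * (2 * v' 0 - w 0)) :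
    IsDenseDir {w : EuclideanSpace ℝ (Fin 2) | w 1 ≤ (w 0) ^ 2} w v' := by
  intro ε hε
  refine ⟨min (ε / 2) (1 / 2), by positivity, lt_of_le_of_lt (min_le_left _ _) (by linarith),
    le_trans (min_le_right _ _) (by norm_num), ?_⟩
  set α := min (ε / 2) (1 / 2) with hαdef
  have hα0 : 0 < α := by positivity
  have hα1 : α ≤ 1 := le_trans (min_le_right _ _) (by norm_num)
  simp only [Set.mem_setOf_eq, PiLp.add_apply, PiLp.smul_apply, PiLp.sub_apply, smul_eq_mul]
  nlinarith [sq_nonneg (α * (v' 0 - w 0)), mul_nonneg hα0.le (sub_nonneg.mpr hw),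
    mul_nonneg (sub_nonneg.mpr hα1) (sub_nonneg.mpr hw), mul_pos hα0 hα0,
    mul_le_mul_of_nonneg_left h hα0.le]

theorem stmt4 (v₀ : ℝ) (v : EuclideanSpace ℝ (Fin 2))
    (hv : v 0 = v₀ ∧ v 1 = v₀ ^ 2) :
    {v' | IsDenseDir {w : EuclideanSpace ℝ (Fin 2) | w 1 ≤ (w 0) ^ 2} v v'} =
        {v' : EuclideanSpace ℝ (Fin 2) | v' 1 ≤ v₀ * (2 * v' 0 - v₀)} ∧
      {v' | IsStableDenseDir {w : EuclideanSpace ℝ (Fin 2) | w 1 ≤ (w 0) ^ 2} v v'} =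
        {v' : EuclideanSpace ℝ (Fin 2) | v' 1 < v₀ * (2 * v' 0 - v₀)} ∧
      v ∉ {v' | IsStableDenseDir {w : EuclideanSpace ℝ (Fin 2) | w 1 ≤ (w 0) ^ 2} v v'} := by
  obtain ⟨hv0, hv1⟩ := hv
  have part2 : {v' | IsStableDenseDir {w : EuclideanSpace ℝ (Fin 2) | w 1 ≤ (w 0) ^ 2} v v'} =
      {v' : EuclideanSpace ℝ (Fin 2) | v' 1 < v₀ * (2 * v' 0 - v₀)} := by
    ext v'
    simp only [Set.mem_setOf_eq]
    constructor
    · rintro ⟨ε, hε, H⟩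
      by_contra hc
      push_neg at hc
      set d : ℝ := v' 0 - v₀ with hd
      set δ : ℝ := min 1 (ε / (2 + 2 * |v₀|)) with hδdef
      have hδ0 : 0 < δ := lt_min one_pos (by positivity)
      have hδ1 : δ ≤ 1 := min_le_left _ _
      have hδε : δ * (2 + 2 * |v₀|) ≤ ε := by
        have h' := min_le_right 1 (ε / (2 + 2 * |v₀|))
        rw [le_div_iff₀ (by positivity)] at h'
        calc δ * (2 + 2 * |v₀|) ≤ (ε / (2 + 2 * |v₀|)) * (2 + 2 * |v₀|) := by
              apply mul_le_mul_of_nonneg_right (min_le_right _ _) (by positivity)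
          _ = ε := by field_simp
      set t : ℝ := if 0 ≤ d then -δ else δ with ht
      have htd : t * d ≤ 0 := by
        rw [ht]; split_ifs with h
        · nlinarith
        · push_neg at h; nlinarith
      have habs : -δ ≤ t ∧ t ≤ δ := by
        rw [ht]; split_ifs <;> constructor <;> linarith
      have ht0 : t ≠ 0 := by
        rw [ht]; split_ifs
        · exact neg_ne_zero.mpr hδ0.ne'
        · exact hδ0.ne'
      set u : EuclideanSpace ℝ (Fin 2) :=
        (WithLp.equiv 2 (Fin 2 → ℝ)).symm ![v₀ + t, (v₀ + t) ^ 2] with hu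
      have hu0 : u 0 = v₀ + t := rfl
      have hu1 : u 1 = (v₀ + t) ^ 2 := rfl
      have humem : u ∈ Metric.closedBall v ε ∩ {w : EuclideanSpace ℝ (Fin 2) | w 1 ≤ (w 0) ^ 2} := by
        constructor
        · rw [Metric.mem_closedBall, EuclideanSpace.dist_eq, Fin.sum_univ_two]
          rw [show ε = Real.sqrt (ε ^ 2) by rw [Real.sqrt_sq hε.le]]
          apply Real.sqrt_le_sqrt
          rw [Real.dist_eq, Real.dist_eq, sq_abs, sq_abs, hu0, hu1, hv0, hv1]
          have hv₀ : -|v₀| ≤ v₀ ∧ v₀ ≤ |v₀| := abs_le.mp (le_refl |v₀|)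
          have ht2 : t ^ 2 ≤ δ ^ 2 := sq_le_sq' habs.1 habs.2
          have hsq1 : (2 * v₀ + t) ^ 2 ≤ (2 * |v₀| + 1) ^ 2 := by
            nlinarith [mul_nonneg (show (0:ℝ) ≤ 2*|v₀|+1-(2*v₀+t) by linarith [hv₀.2, habs.2])
              (show (0:ℝ) ≤ 2*|v₀|+1+(2*v₀+t) by linarith [hv₀.1, habs.1])]
          have hsq1' : 1 + (2 * v₀ + t) ^ 2 ≤ 1 + (2 * |v₀| + 1) ^ 2 := by linarith
          have hsq2 : t ^ 2 * (1 + (2 * v₀ + t) ^ 2) ≤ δ ^ 2 * (1 + (2 * |v₀| + 1) ^ 2) :=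
            mul_le_mul ht2 hsq1' (by positivity) (sq_nonneg δ)
          have hsq3 : δ ^ 2 * (1 + (2 * |v₀| + 1) ^ 2) ≤ δ ^ 2 * (2 + 2 * |v₀|) ^ 2 := by
            apply mul_le_mul_of_nonneg_left _ (sq_nonneg δ)
            nlinarith [abs_nonneg v₀]
          have hsq4 : δ ^ 2 * (2 + 2 * |v₀|) ^ 2 ≤ ε ^ 2 := by
            have hss := mul_self_le_mul_self
              (mul_nonneg hδ0.le (show (0:ℝ) ≤ 2 + 2 * |v₀| by positivity)) hδε
            nlinarith [hss]
          have key : t ^ 2 + (t * (2 * v₀ + t)) ^ 2 ≤ ε ^ 2 := by nlinarith [hsq2, hsq3, hsq4]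
          nlinarith [key]
        · simp only [Set.mem_setOf_eq, hu0, hu1, le_refl]
      have hA := lemA (v₀ + t) u v' hu0 hu1 (H u humem)
      have ht2pos : 0 < t ^ 2 := by positivity
      nlinarith [htd, ht2pos, hA, hc]
    · intro h
      set g : ℝ := v₀ * (2 * v' 0 - v₀) - v' 1 with hgdef
      have hg0 : 0 < g := by simp only [hgdef]; linarith
      set ε : ℝ := min 1 (g / (2 * |v' 0| + 2 * |v₀| + 2)) with hεdef
      have hε0 : 0 < ε := lt_min one_pos (by positivity)
      refine ⟨ε, hε0, fun w hwmem => ?_⟩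
      obtain ⟨hwball, hwΩ⟩ := hwmem
      apply lemB w v' hwΩ
      have hdist : |w 0 - v₀| ≤ ε := by
        have := le_trans (coord_abs_le_dist w v 0) (Metric.mem_closedBall.mp hwball)
        rwa [hv0] at this
      obtain ⟨h1, h2⟩ := abs_le.mp hdist
      have hε1 : ε ≤ 1 := min_le_left _ _
      have hεg : ε * (2 * |v' 0| + 2 * |v₀| + 2) ≤ g := by
        calc ε * (2 * |v' 0| + 2 * |v₀| + 2)
            ≤ (g / (2 * |v' 0| + 2 * |v₀| + 2)) * (2 * |v' 0| + 2 * |v₀| + 2) := by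
              apply mul_le_mul_of_nonneg_right (min_le_right _ _) (by positivity)
          _ = g := by field_simp
      have pa : |(w 0 - v₀) * v' 0| ≤ ε * |v' 0| := by
        rw [abs_mul]; exact mul_le_mul_of_nonneg_right hdist (abs_nonneg _)
      have pb : |(w 0 - v₀) * v₀| ≤ ε * |v₀| := by
        rw [abs_mul]; exact mul_le_mul_of_nonneg_right hdist (abs_nonneg _)
      have pc : (w 0 - v₀) ^ 2 ≤ ε ^ 2 := sq_le_sq' h1 h2
      have pd : ε ^ 2 ≤ ε := by nlinarith
      obtain ⟨pa1, pa2⟩ := abs_le.mp pa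
      obtain ⟨pb1, pb2⟩ := abs_le.mp pb
      linarith [pa1, pa2, pb1, pb2, pc, pd, hεg]
  refine ⟨?_, part2, ?_⟩
  · ext v'
    simp only [Set.mem_setOf_eq]
    constructor
    · exact fun h => lemA v₀ v v' hv0 hv1 h
    · intro h
      exact lemB v v' (by simp only [Set.mem_setOf_eq, hv0, hv1, le_refl]) (by rw [hv0]; exact h)
  · rw [part2]
    simp only [Set.mem_setOf_eq, hv1, hv0]
    push_neg
    nlinarith [sq_nonneg v₀]
end

section
/- If Ω is the unit circle {v ∈ ℝ² | ‖v‖ = 1}, then for every v ∈ Ω the set of stable Ω-dense directions from v is empty: 𝒟^Ω_stab(v) = ∅. -/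
/-!
A line through a point `v` of a sphere meets the sphere in at most one further point, so from `v`
the only dense direction is `v` itself. Stability would make `v` a dense direction also from the
points of the sphere near `v`; in dimension at least two the sphere is connected, so there are
such points other than `v`, and from them `v` is not a dense direction.
-/

open Metric

theorem IsPreconnected.exists_mem_inter_ball_ne {X : Type*} [PseudoMetricSpace X] {s : Set X}
    (hs : IsPreconnected s) {x y : X} (hx : x ∈ s) (hy : y ∈ s) (hyx : y ≠ x) {ε : ℝ}
    (hε : 0 < ε) : ∃ z ∈ s ∩ ball x ε, z ≠ x := by
  by_contra! hisolated
  have hfar : ∀ z ∈ s, z ≠ x → ε ≤ dist z x := fun z hz hzx ↦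
    not_lt.mp fun hlt ↦ hzx (hisolated z ⟨hz, hlt⟩)
  have hcover : s ⊆ ball x (ε / 2) ∪ (closedBall x (ε / 2))ᶜ := by
    intro z hz
    rcases eq_or_ne z x with rfl | hzx
    · exact Or.inl (mem_ball_self (half_pos hε))
    · exact Or.inr fun hz' ↦ by linarith [mem_closedBall.mp hz', hfar z hz hzx]
  have hsub := hs.subset_left_of_subset_union isOpen_ball isClosed_closedBall.isOpen_compl
    (Set.disjoint_compl_right_iff_subset.mpr ball_subset_closedBall)
    hcover ⟨x, hx, mem_ball_self (half_pos hε)⟩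
  linarith [mem_ball.mp (hsub hy), hfar y hy hyx]

section LineMeetsSphere

variable {E : Type*} [NormedAddCommGroup E] [InnerProductSpace ℝ E]

theorem mul_norm_sq_eq_of_add_smul_mem_sphere {c x d : E} {r α : ℝ} (hx : x ∈ sphere c r)
    (hα : α ≠ 0) (h : x + α • d ∈ sphere c r) : α * ‖d‖ ^ 2 = -2 * inner ℝ (x - c) d := by
  rw [mem_sphere_iff_norm] at hx h
  rw [← sub_add_eq_add_sub] at h
  have hexpand : ‖x - c + α • d‖ ^ 2 = ‖x - c‖ ^ 2 + 2 * inner ℝ (x - c) (α • d) + ‖α • d‖ ^ 2 :=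
    norm_add_sq_real _ _
  rw [h, hx, real_inner_smul_right, norm_smul, mul_pow,
    Real.norm_eq_abs, sq_abs] at hexpand
  have : α * (α * ‖d‖ ^ 2 + 2 * inner ℝ (x - c) d) = 0 := by linarith
  linarith [(mul_eq_zero.mp this).resolve_left hα]

theorem eq_of_add_smul_mem_sphere {c x d : E} {r α β : ℝ} (hx : x ∈ sphere c r) (hd : d ≠ 0)
    (hα : α ≠ 0) (hβ : β ≠ 0) (hxα : x + α • d ∈ sphere c r) (hxβ : x + β • d ∈ sphere c r) :
    α = β :=
  mul_right_cancel₀ (pow_ne_zero 2 (norm_ne_zero_iff.mpr hd)) <|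
    (mul_norm_sq_eq_of_add_smul_mem_sphere hx hα hxα).trans
      (mul_norm_sq_eq_of_add_smul_mem_sphere hx hβ hxβ).symm

end LineMeetsSphere

section DenseDirections

variable {m : ℕ} {c v v' : EuclideanSpace ℝ (Fin m)} {r : ℝ}

theorem not_isDenseDir_sphere (hv : v ∈ sphere c r) (hne : v' ≠ v) :
    ¬ IsDenseDir (sphere c r) v v' := by
  intro hdense
  obtain ⟨α, hα, -, -, hvα⟩ := hdense 1 one_pos
  obtain ⟨β, hβ, hβα, -, hvβ⟩ := hdense α hα
  exact hβα.ne' (eq_of_add_smul_mem_sphere hv (sub_ne_zero.mpr hne) hα.ne' hβ.ne' hvα hvβ)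

theorem not_isStableDenseDir_sphere (hm : 1 < m) (hr : 0 < r) (hv : v ∈ sphere c r) :
    ¬ IsStableDenseDir (sphere c r) v v' := by
  rintro ⟨ε, hε, hstable⟩
  rcases ne_or_eq v' v with hne | hv'
  · exact not_isDenseDir_sphere hv hne (hstable v ⟨mem_closedBall_self hε.le, hv⟩)
  have hrank : 1 < Module.rank ℝ (EuclideanSpace ℝ (Fin m)) := by
    rw [← Module.finrank_eq_rank, finrank_euclideanSpace_fin]
    exact_mod_cast hm
  have hantipode : c - (v - c) ∈ sphere c r := by
    rwa [mem_sphere_iff_norm, sub_sub_cancel_left, norm_neg, ← mem_sphere_iff_norm]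
  have hantipode_ne : c - (v - c) ≠ v := by
    intro h
    have hvc : v - c = 0 := by
      have : (2 : ℝ) • (v - c) = 0 := by linear_combination (norm := module) -h
      exact (smul_eq_zero.mp this).resolve_left two_ne_zero
    rw [mem_sphere_iff_norm, hvc, norm_zero] at hv
    exact hr.ne hv
  obtain ⟨w, ⟨hw, hwv⟩, hne⟩ := (isPreconnected_sphere hrank c r).exists_mem_inter_ball_ne hv
    hantipode hantipode_ne hε
  exact not_isDenseDir_sphere hw (hv' ▸ hne.symm) (hstable w ⟨ball_subset_closedBall hwv, hw⟩)

end DenseDirections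

theorem stmt5 (v : EuclideanSpace ℝ (Fin 2))
    (hv : v ∈ {w : EuclideanSpace ℝ (Fin 2) | ‖w‖ = 1}) :
    {v' | IsStableDenseDir {w : EuclideanSpace ℝ (Fin 2) | ‖w‖ = 1} v v'} = ∅ := by
  have hsphere : {w : EuclideanSpace ℝ (Fin 2) | ‖w‖ = 1} = sphere 0 1 := by
    ext w
    simp
  rw [hsphere] at hv ⊢
  exact Set.eq_empty_of_forall_notMem fun v' ↦
    not_isStableDenseDir_sphere one_lt_two one_pos hv
end

section
/- Let S be a nonempty closed convex subset of ℝ^j. Let (x_k) be a sequence in ℝ^j converging to a point x ∈ S, and (ζ_k) a sequence of nonnegative reals such that ζ_k·(x_k − P_S(x_k)) converges to some x' ∈ ℝ^j, where P_S denotes the metric projection onto S. Then x' belongs to the orthogonal of S at x, i.e. ⟨x', x'' − x⟩ ≤ 0 for every x'' ∈ S. -/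
/-!
The projection residual `u - P u` is an outer normal to `S` at `P u`: `⟪u - P u, w - P u⟫ ≤ 0`
for all `w ∈ S`. Scaling by `ζ_k ≥ 0` keeps this sign, and since `‖x_k - P x_k‖ ≤ ‖x_k - x‖`,
the projections `P x_k` tend to `x`, so the inequality passes to the limit.
-/

open Filter Topology Metric

theorem real_inner_sub_le_zero_of_norm_sub_eq_infDist {E : Type*} [NormedAddCommGroup E]
    [InnerProductSpace ℝ E] {S : Set E} (hS : Convex ℝ S) {u p w : E} (hp : p ∈ S)
    (hdist : ‖u - p‖ = infDist u S) (hw : w ∈ S) :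
    inner ℝ (u - p) (w - p) ≤ 0 := by
  refine (norm_eq_iInf_iff_real_inner_le_zero hS hp).mp ?_ w hw
  rw [hdist, infDist_eq_iInf]
  simp only [dist_eq_norm]

theorem tendsto_comp_of_norm_sub_eq_infDist {E ι : Type*} [SeminormedAddCommGroup E]
    {S : Set E} {P : E → E} (hP : ∀ u, ‖u - P u‖ = infDist u S) {x : E} (hx : x ∈ S)
    {l : Filter ι} {xk : ι → E} (hxk : Tendsto xk l (𝓝 x)) :
    Tendsto (fun k => P (xk k)) l (𝓝 x) := by
  have hres : Tendsto (fun k => xk k - P (xk k)) l (𝓝 0) := by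
    rw [tendsto_zero_iff_norm_tendsto_zero]
    refine squeeze_zero (fun _ => norm_nonneg _) (fun k => ?_)
      (tendsto_iff_dist_tendsto_zero.mp hxk)
    rw [hP]
    exact infDist_le_dist_of_mem hx
  simpa using hxk.sub hres

theorem stmt6_general {j : ℕ} (S : Set (EuclideanSpace ℝ (Fin j)))
    (hconv : Convex ℝ S)
    (P : EuclideanSpace ℝ (Fin j) → EuclideanSpace ℝ (Fin j))
    (hP : ∀ x, P x ∈ S ∧ ‖x - P x‖ = Metric.infDist x S)
    (x : EuclideanSpace ℝ (Fin j)) (hx : x ∈ S)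
    (xk : ℕ → EuclideanSpace ℝ (Fin j)) (ζ : ℕ → ℝ) (hζ : ∀ k, 0 ≤ ζ k)
    (hxk : Filter.Tendsto xk Filter.atTop (nhds x))
    (x' : EuclideanSpace ℝ (Fin j))
    (hx' : Filter.Tendsto (fun k => ζ k • (xk k - P (xk k))) Filter.atTop (nhds x')) :
    ∀ x'' ∈ S, (inner ℝ x' (x'' - x) : ℝ) ≤ 0 := by
  intro x'' hx''
  have hPxk : Tendsto (fun k => P (xk k)) atTop (𝓝 x) :=
    tendsto_comp_of_norm_sub_eq_infDist (fun u => (hP u).2) hx hxk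
  have hlim : Tendsto (fun k => inner ℝ (ζ k • (xk k - P (xk k))) (x'' - P (xk k))) atTop
      (𝓝 (inner ℝ x' (x'' - x))) :=
    hx'.inner (tendsto_const_nhds.sub hPxk)
  refine le_of_tendsto hlim (Eventually.of_forall fun k => ?_)
  rw [real_inner_smul_left]
  exact mul_nonpos_of_nonneg_of_nonpos (hζ k)
    (real_inner_sub_le_zero_of_norm_sub_eq_infDist hconv (hP _).1 (hP _).2 hx'')

theorem stmt6 {j : ℕ} (S : Set (EuclideanSpace ℝ (Fin j)))
    (hne : S.Nonempty) (hcl : IsClosed S) (hconv : Convex ℝ S)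
    (P : EuclideanSpace ℝ (Fin j) → EuclideanSpace ℝ (Fin j))
    (hP : ∀ x, P x ∈ S ∧ ‖x - P x‖ = Metric.infDist x S)
    (x : EuclideanSpace ℝ (Fin j)) (hx : x ∈ S)
    (xk : ℕ → EuclideanSpace ℝ (Fin j)) (ζ : ℕ → ℝ) (hζ : ∀ k, 0 ≤ ζ k)
    (hxk : Filter.Tendsto xk Filter.atTop (nhds x))
    (x' : EuclideanSpace ℝ (Fin j))
    (hx' : Filter.Tendsto (fun k => ζ k • (xk k - P (xk k))) Filter.atTop (nhds x')) :
    ∀ x'' ∈ S, (inner ℝ x' (x'' - x) : ℝ) ≤ 0 :=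
  stmt6_general S hconv P hP x hx xk ζ hζ hxk x' hx'
end

section
/- Let S be a nonempty closed convex subset of ℝ^j and P_S the nearest-point projection onto S. Then the squared distance function x ↦ d_S(x)² is differentiable on ℝ^j, with derivative at x in direction x' equal to 2⟨x − P_S(x), x'⟩. -/
open RealInnerProductSpace Metric

theorem stmt7 {j : ℕ} (S : Set (EuclideanSpace ℝ (Fin j)))
    (hne : S.Nonempty) (hcl : IsClosed S) (hconv : Convex ℝ S)
    (P : EuclideanSpace ℝ (Fin j) → EuclideanSpace ℝ (Fin j))
    (hP : ∀ x, P x ∈ S ∧ ‖x - P x‖ = Metric.infDist x S) :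
    ∀ x : EuclideanSpace ℝ (Fin j),
      HasFDerivAt (fun y => Metric.infDist y S ^ 2)
        ((2 : ℝ) • (innerSL ℝ (x - P x))) x := by
  intro x
  -- infDist as an iInf of norms
  have hiInf : ∀ u : EuclideanSpace ℝ (Fin j),
      Metric.infDist u S = ⨅ w : S, ‖u - w‖ := by
    intro u
    rw [Metric.infDist_eq_iInf]
    simp only [dist_eq_norm]
  -- characterization of the projection
  have hchar : ∀ u : EuclideanSpace ℝ (Fin j), ∀ w ∈ S, ⟪u - P u, w - P u⟫ ≤ 0 := by
    intro u
    apply (norm_eq_iInf_iff_real_inner_le_zero hconv (hP u).1 (u := u)).1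
    rw [(hP u).2, hiInf]
  -- projection is 1-Lipschitz
  have hlip : ∀ u v : EuclideanSpace ℝ (Fin j), ‖P u - P v‖ ≤ ‖u - v‖ := by
    intro u v
    have h1 := hchar u (P v) (hP v).1
    have h2 := hchar v (P u) (hP u).1
    have key : ‖P u - P v‖ ^ 2 ≤ ⟪u - v, P u - P v⟫ := by
      have hsum := add_nonpos h1 h2
      have e1 : ⟪u - P u, P v - P u⟫ + ⟪v - P v, P u - P v⟫
          = ⟪u - v, P v - P u⟫ + ‖P u - P v‖ ^ 2 := by
        have hu : (u - P u : EuclideanSpace ℝ (Fin j))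
            = (u - v) + (v - P v) + (P v - P u) := by abel
        rw [hu, inner_add_left, inner_add_left, real_inner_self_eq_norm_sq,
          show (P u - P v : EuclideanSpace ℝ (Fin j)) = -(P v - P u) from by abel,
          inner_neg_right, norm_neg, ← norm_sub_rev (P u)]
        ring
      rw [e1] at hsum
      have h3 : ‖P u - P v‖ ^ 2 ≤ -⟪u - v, P v - P u⟫ := by linarith
      rw [← inner_neg_right] at h3
      simpa using h3
    have habs : ⟪u - v, P u - P v⟫ ≤ ‖u - v‖ * ‖P u - P v‖ := real_inner_le_norm _ _
    nlinarith [norm_nonneg (P u - P v), norm_nonneg (u - v)]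
  -- main estimate
  rw [hasFDerivAt_iff_isLittleO_nhds_zero]
  have hbound : ∀ h : EuclideanSpace ℝ (Fin j),
      |Metric.infDist (x + h) S ^ 2 - Metric.infDist x S ^ 2
        - ((2 : ℝ) • (innerSL ℝ (x - P x))) h| ≤ 5 * ‖h‖ ^ 2 := by
    intro h
    set y := x + h with hy
    have hdx : Metric.infDist x S = ‖x - P x‖ := ((hP x).2).symm
    have hdy : Metric.infDist y S = ‖y - P y‖ := ((hP y).2).symm
    have happ : ((2 : ℝ) • (innerSL ℝ (x - P x))) h = 2 * ⟪x - P x, h⟫ := by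
      simp only [ContinuousLinearMap.smul_apply, innerSL_apply_apply, smul_eq_mul]
    rw [hdx, hdy, happ]
    -- upper bound
    have hub : ‖y - P y‖ ^ 2 ≤ ‖x - P x‖ ^ 2 + 2 * ⟪x - P x, h⟫ + ‖h‖ ^ 2 := by
      have h1 : Metric.infDist y S ≤ ‖y - P x‖ := by
        have h0 := Metric.infDist_le_dist_of_mem (x := y) (hP x).1
        rwa [dist_eq_norm] at h0
      have h2 : ‖y - P x‖ ^ 2 = ‖x - P x‖ ^ 2 + 2 * ⟪x - P x, h⟫ + ‖h‖ ^ 2 := by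
        have he : y - P x = (x - P x) + h := by rw [hy]; abel
        rw [he, norm_add_sq_real]
      calc ‖y - P y‖ ^ 2 = Metric.infDist y S ^ 2 := by rw [hdy]
        _ ≤ ‖y - P x‖ ^ 2 := by
            apply pow_le_pow_left₀ Metric.infDist_nonneg h1
        _ = _ := h2
    -- lower bound
    have hlb : ‖x - P x‖ ^ 2 ≤ ‖y - P y‖ ^ 2 - 2 * ⟪y - P y, h⟫ + ‖h‖ ^ 2 := by
      have h1 : Metric.infDist x S ≤ ‖x - P y‖ := by
        have h0 := Metric.infDist_le_dist_of_mem (x := x) (hP y).1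
        rwa [dist_eq_norm] at h0
      have h2 : ‖x - P y‖ ^ 2 = ‖y - P y‖ ^ 2 - 2 * ⟪y - P y, h⟫ + ‖h‖ ^ 2 := by
        have he : x - P y = (y - P y) + (-h) := by rw [hy]; abel
        rw [he, norm_add_sq_real, inner_neg_right, norm_neg]
        ring
      calc ‖x - P x‖ ^ 2 = Metric.infDist x S ^ 2 := by rw [hdx]
        _ ≤ ‖x - P y‖ ^ 2 := by
            apply pow_le_pow_left₀ Metric.infDist_nonneg h1
        _ = _ := h2
    -- combine using Lipschitz
    have hd : ⟪(y - P y) - (x - P x), h⟫ ≥ -(2 * ‖h‖ ^ 2) := by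
      have hn : ‖(y - P y) - (x - P x)‖ ≤ 2 * ‖h‖ := by
        have he : (y - P y) - (x - P x) = h - (P y - P x) := by rw [hy]; abel
        rw [he]
        calc ‖h - (P y - P x)‖ ≤ ‖h‖ + ‖P y - P x‖ := norm_sub_le _ _
          _ ≤ ‖h‖ + ‖y - x‖ := by linarith [hlip y x]
          _ = 2 * ‖h‖ := by rw [hy, show x + h - x = h from by abel]; ring
      have hnn : ‖(x - P x) - (y - P y)‖ = ‖(y - P y) - (x - P x)‖ := norm_sub_rev _ _
      have hmul : ‖(y - P y) - (x - P x)‖ * ‖h‖ ≤ 2 * ‖h‖ * ‖h‖ :=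
        mul_le_mul_of_nonneg_right hn (norm_nonneg h)
      have hle : ⟪(x - P x) - (y - P y), h⟫ ≤ 2 * ‖h‖ ^ 2 := by
        calc ⟪(x - P x) - (y - P y), h⟫ ≤ ‖(x - P x) - (y - P y)‖ * ‖h‖ :=
              real_inner_le_norm _ _
          _ = ‖(y - P y) - (x - P x)‖ * ‖h‖ := by rw [hnn]
          _ ≤ 2 * ‖h‖ * ‖h‖ := hmul
          _ = 2 * ‖h‖ ^ 2 := by ring
      have hflip : ⟪(x - P x) - (y - P y), h⟫ = -⟪(y - P y) - (x - P x), h⟫ := by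
        rw [← inner_neg_left]; congr 1; abel
      rw [hflip] at hle
      linarith
    have hinner : ⟪(y - P y) - (x - P x), h⟫ = ⟪y - P y, h⟫ - ⟪x - P x, h⟫ :=
      inner_sub_left _ _ _
    rw [abs_le]
    constructor <;> nlinarith [hd, hinner]
  rw [Asymptotics.isLittleO_iff]
  intro c hc
  filter_upwards [Metric.ball_mem_nhds (0 : EuclideanSpace ℝ (Fin j))
    (show (0:ℝ) < c / 5 by linarith)] with h hh
  rw [Metric.mem_ball, dist_zero_right] at hh
  calc ‖Metric.infDist (x + h) S ^ 2 - Metric.infDist x S ^ 2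
        - ((2 : ℝ) • (innerSL ℝ (x - P x))) h‖
      = |Metric.infDist (x + h) S ^ 2 - Metric.infDist x S ^ 2
        - ((2 : ℝ) • (innerSL ℝ (x - P x))) h| := rfl
    _ ≤ 5 * ‖h‖ ^ 2 := hbound h
    _ ≤ c * ‖h‖ := by nlinarith [norm_nonneg h]
end

section
/- Failure of the discrete maximization condition: on 𝕋 = {0,1,2} consider the system q(k+1) = q(k) + u(k) − q(k) (i.e. q(k+1) = u(k)) with q(0)=0, controls u(k) ∈ [0,1], and cost Σ_{k=0}^{1} (2q(k)² − u(k)²). Then the cost of the trajectory associated to (u(0),u(1)) equals u(0)² − u(1)², and the unique optimal control is u*(0) = 0, u*(1) = 1. -/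
/-- Trajectory of the discrete system q(k+1) = u(k), q(0) = 0. -/
def traj11 (u : ℕ → ℝ) : ℕ → ℝ
  | 0 => 0
  | k + 1 => traj11 u k + (u k - traj11 u k)

/-- Cost Σ_{k=0}^{1} (2 q(k)² − u(k)²). -/
noncomputable def cost11 (u : ℕ → ℝ) : ℝ :=
  ∑ k ∈ Finset.range 2, (2 * (traj11 u k) ^ 2 - (u k) ^ 2)

/-! Since `q(k+1) = u(k)`, the cost collapses to `u(0)² − u(1)²`, which on `[0,1]²` is
at least `−1`, with equality only at `(0, 1)`. -/

open Set

theorem traj11_succ (u : ℕ → ℝ) (k : ℕ) : traj11 u (k + 1) = u k := by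
  simp [traj11]

theorem cost11_eq (u : ℕ → ℝ) : cost11 u = u 0 ^ 2 - u 1 ^ 2 := by
  simp only [cost11, Finset.sum_range_succ, Finset.sum_range_zero, traj11_succ, traj11.eq_1]
  ring

theorem neg_one_le_sq_sub_sq (a : ℝ) {b : ℝ} (hb : b ∈ Icc (0 : ℝ) 1) : -1 ≤ a ^ 2 - b ^ 2 := by
  nlinarith [sq_nonneg a, hb.1, hb.2]

theorem eq_zero_and_eq_one_of_sq_sub_sq_le {a b : ℝ} (hb : b ∈ Icc (0 : ℝ) 1)
    (h : a ^ 2 - b ^ 2 ≤ -1) : a = 0 ∧ b = 1 := by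
  have hb_sq : b ^ 2 ≤ 1 := by nlinarith [hb.1, hb.2]
  have ha : a ^ 2 = 0 := by nlinarith [sq_nonneg a]
  exact ⟨pow_eq_zero_iff two_ne_zero |>.mp ha, by nlinarith [hb.1, hb.2]⟩

theorem stmt11 :
    (∀ u : ℕ → ℝ, cost11 u = (u 0) ^ 2 - (u 1) ^ 2) ∧
    (∀ u : ℕ → ℝ, (∀ k < 2, u k ∈ Set.Icc (0 : ℝ) 1) →
      cost11 (fun k => if k = 0 then 0 else 1) ≤ cost11 u) ∧
    (∀ u : ℕ → ℝ, (∀ k < 2, u k ∈ Set.Icc (0 : ℝ) 1) →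
      (∀ u' : ℕ → ℝ, (∀ k < 2, u' k ∈ Set.Icc (0 : ℝ) 1) → cost11 u ≤ cost11 u') →
      u 0 = 0 ∧ u 1 = 1) := by
  have hcost_opt : cost11 (fun k => if k = 0 then 0 else 1) = -1 := by
    norm_num [cost11_eq]
  refine ⟨cost11_eq, fun u hu => ?_, fun u hu hopt => ?_⟩
  · rw [hcost_opt, cost11_eq]
    exact neg_one_le_sq_sub_sq (u 0) (hu 1 one_lt_two)
  · have hopt_admissible : ∀ k < 2, (if k = 0 then (0 : ℝ) else 1) ∈ Icc (0 : ℝ) 1 := by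
      intro k _
      split_ifs <;> norm_num
    have hle := hopt _ hopt_admissible
    rw [hcost_opt, cost11_eq] at hle
    exact eq_zero_and_eq_one_of_sq_sub_sq_le (hu 1 one_lt_two) hle
end
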